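/- Let u, v ∈ V with u ≠ v, and let W(u) and W(v) be two independent √c-walks from u and from v respectively. Then the probability that W(u) and W(v) meet is at most c; i.e., s(u,v) ≤ c for u ≠ v. -/

import Mathlib

open scoped BigOperators Classical

variable {V : Type*}

/-- `p` is a possible realization of a `√c`-walk from `u`: it is nonempty,
starts at `u`, and each step moves to an in-neighbor of the current node. -/
def IsWalkFrom (I : V → Finset V) (u : V) (p : List V) : Prop :=
  p.head? = some u ∧ List.Chain' (fun a b => b ∈ I a) p

/-- The probability that the `√c`-walk from `u` is exactly the finite sequence `p`:
`(1−√c)·∏_{k=1}^{ℓ−1} (√c/|I(u_k)|)` if `p = (u_1,…,u_ℓ)` is a walk from `u`,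
and `0` otherwise. -/
noncomputable def walkWeight (I : V → Finset V) (c : ℝ) (u : V) (p : List V) : ℝ :=
  if IsWalkFrom I u p then
    (1 - Real.sqrt c) *
      ∏ k ∈ Finset.range (p.length - 1), Real.sqrt c / ((I (p.getD k u)).card : ℝ)
  else 0

/-- Two finite sequences meet: for some index both sequences are long enough and
their entries at that index coincide. -/
def Meets (w₁ w₂ : List V) : Prop :=
  ∃ k, k < w₁.length ∧ k < w₂.length ∧ w₁[k]? = w₂[k]?

/-- SimRank `s(u,v)`: the probability that two independent `√c`-walks from `u`
and from `v` meet. -/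
noncomputable def simRank (I : V → Finset V) (c : ℝ) (u v : V) : ℝ :=
  ∑' w : List V × List V,
    walkWeight I c u w.1 * walkWeight I c v w.2 * (if Meets w.1 w.2 then 1 else 0)

/-! Two walks from distinct nodes differ in their first entry, so a meeting pair consists of two
walks that both take at least one step. A walk from `u` that takes a step is `u` followed by a walk
from some `w ∈ I(u)`, which carries the factor `√c/|I(u)|`; since the walks from any node have
total weight at most `1` (induction on the length), those from `u` that take a step weigh at most
`√c`. The meeting pairs therefore weigh at most `√c · √c = c`. -/

variable {I : V → Finset V} {c : ℝ} {u v : V}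

theorem isWalkFrom_iff {p : List V} :
    IsWalkFrom I u p ↔ p.head? = some u ∧ p.IsChain (fun a b => b ∈ I a) :=
  Iff.rfl

theorem isWalkFrom_cons_cons {x y : V} {r : List V} :
    IsWalkFrom I u (x :: y :: r) ↔ x = u ∧ y ∈ I u ∧ IsWalkFrom I y (y :: r) := by
  simp only [isWalkFrom_iff, List.head?_cons, Option.some.injEq, List.isChain_cons_cons,
    true_and]
  constructor <;> rintro ⟨rfl, hy, hr⟩ <;> exact ⟨rfl, hy, hr⟩

theorem walkWeight_of_not_isWalkFrom {p : List V} (h : ¬IsWalkFrom I u p) :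
    walkWeight I c u p = 0 :=
  if_neg h

theorem walkWeight_nonneg (hc : c ≤ 1) (u : V) (p : List V) : 0 ≤ walkWeight I c u p := by
  unfold walkWeight
  split
  · have : Real.sqrt c ≤ 1 := Real.sqrt_le_one.mpr hc
    exact mul_nonneg (by linarith) (Finset.prod_nonneg fun _ _ => by positivity)
  · rfl

theorem walkWeight_nil : walkWeight I c u [] = 0 :=
  walkWeight_of_not_isWalkFrom (by simp [isWalkFrom_iff])

theorem walkWeight_singleton : walkWeight I c u [u] = 1 - Real.sqrt c := by
  simp [walkWeight, isWalkFrom_iff]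

theorem walkWeight_cons_cons (y : V) (r : List V) :
    walkWeight I c u (u :: y :: r) =
      if y ∈ I u then Real.sqrt c / (I u).card * walkWeight I c y (y :: r) else 0 := by
  by_cases hy : y ∈ I u
  · by_cases hwalk : IsWalkFrom I y (y :: r)
    · have hwalk' : IsWalkFrom I u (u :: y :: r) := isWalkFrom_cons_cons.mpr ⟨rfl, hy, hwalk⟩
      have hgetD : ∀ k ∈ Finset.range r.length,
          Real.sqrt c / (I ((u :: y :: r).getD (k + 1) u)).card
            = Real.sqrt c / (I ((y :: r).getD k y)).card := by
        intro k hk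
        have hk : k < (y :: r).length := Nat.lt_succ_of_lt (Finset.mem_range.mp hk)
        rw [List.getD_cons_succ, List.getD_eq_getElem _ _ hk, List.getD_eq_getElem _ _ hk]
      rw [if_pos hy, walkWeight, if_pos hwalk', walkWeight, if_pos hwalk]
      simp only [List.length_cons, Nat.add_sub_cancel]
      rw [Finset.prod_range_succ', Finset.prod_congr rfl hgetD, List.getD_cons_zero]
      ring
    · rw [if_pos hy, walkWeight_of_not_isWalkFrom hwalk, mul_zero]
      exact walkWeight_of_not_isWalkFrom fun h => hwalk (isWalkFrom_cons_cons.mp h).2.2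
  · rw [if_neg hy]
    exact walkWeight_of_not_isWalkFrom fun h => hy (isWalkFrom_cons_cons.mp h).2.1

/-- Only `w = q.head` contributes to the sum. -/
theorem walkWeight_cons_of_ne_nil {q : List V} (hq : q ≠ []) :
    walkWeight I c u (u :: q) = Real.sqrt c / (I u).card * ∑ w ∈ I u, walkWeight I c w q := by
  obtain ⟨y, r, rfl⟩ := List.exists_cons_of_ne_nil hq
  have hsum : ∑ w ∈ I u, walkWeight I c w (y :: r) =
      if y ∈ I u then walkWeight I c y (y :: r) else 0 := by
    rw [← Finset.sum_ite_eq (I u) y fun _ => walkWeight I c y (y :: r)]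
    refine Finset.sum_congr rfl fun w _ => ?_
    split_ifs with hw
    · rw [hw]
    · exact walkWeight_of_not_isWalkFrom fun h => hw (by simpa [isWalkFrom_iff] using h.1)
  rw [walkWeight_cons_cons, hsum]
  split_ifs <;> simp

theorem sum_walkWeight_le_sum_cons (hc : c ≤ 1) (A : Finset (List V)) :
    ∑ p ∈ A, walkWeight I c u p ≤ ∑ q ∈ A.image List.tail, walkWeight I c u (u :: q) := by
  have hwalks :
      ∑ p ∈ A with IsWalkFrom I u p, walkWeight I c u p = ∑ p ∈ A, walkWeight I c u p :=
    Finset.sum_filter_of_ne fun p _ h => by_contra fun hp => h (walkWeight_of_not_isWalkFrom hp)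
  have hsub : {p ∈ A | IsWalkFrom I u p} ⊆ (A.image List.tail).image (u :: ·) := by
    intro p hp
    obtain ⟨hpA, hhead, -⟩ := Finset.mem_filter.mp hp
    have hp : p = u :: p.tail := by cases p <;> simp_all
    exact Finset.mem_image.mpr ⟨p.tail, Finset.mem_image_of_mem _ hpA, hp.symm⟩
  rw [← hwalks, ← Finset.sum_image fun _ _ _ _ h => List.cons_injective h]
  exact Finset.sum_le_sum_of_subset_of_nonneg hsub fun _ _ _ => walkWeight_nonneg hc _ _

theorem sum_walkWeight_cons_le_sqrt {T : Finset (List V)} (hnil : [] ∉ T)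
    (hT : ∀ w ∈ I u, ∑ q ∈ T, walkWeight I c w q ≤ 1) :
    ∑ q ∈ T, walkWeight I c u (u :: q) ≤ Real.sqrt c := by
  have hcons : ∀ q ∈ T, walkWeight I c u (u :: q)
      = Real.sqrt c / (I u).card * ∑ w ∈ I u, walkWeight I c w q :=
    fun q hq => walkWeight_cons_of_ne_nil (ne_of_mem_of_not_mem hq hnil)
  calc ∑ q ∈ T, walkWeight I c u (u :: q)
      = Real.sqrt c / (I u).card * ∑ w ∈ I u, ∑ q ∈ T, walkWeight I c w q := by
        rw [Finset.sum_congr rfl hcons, ← Finset.mul_sum, Finset.sum_comm]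
    _ ≤ Real.sqrt c / (I u).card * (I u).card := by
        gcongr
        simpa using Finset.sum_le_sum hT
    _ ≤ Real.sqrt c := by
        rcases eq_or_ne ((I u).card : ℝ) 0 with h | h
        · simp [h]
        · rw [div_mul_cancel₀ _ h]

theorem sum_walkWeight_le_one (hc : c ≤ 1) (u : V) (A : Finset (List V)) :
    ∑ p ∈ A, walkWeight I c u p ≤ 1 := by
  suffices h : ∀ n (u : V) (A : Finset (List V)), (∀ p ∈ A, p.length ≤ n) →
      ∑ p ∈ A, walkWeight I c u p ≤ 1 from
    h _ u A fun p hp => Finset.le_sup (f := List.length) hp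
  intro n
  induction n with
  | zero =>
    intro u A hA
    rw [Finset.sum_eq_zero fun p hp => by
      rw [List.eq_nil_of_length_eq_zero (Nat.le_zero.mp (hA p hp)), walkWeight_nil]]
    exact zero_le_one
  | succ n ih =>
    intro u A hA
    set T := A.image List.tail
    have hT : ∀ w, ∑ q ∈ T.erase [], walkWeight I c w q ≤ 1 := by
      refine fun w => ih w _ fun q hq => ?_
      obtain ⟨p, hp, rfl⟩ := Finset.mem_image.mp (Finset.mem_of_mem_erase hq)
      simpa using hA p hp
    calc ∑ p ∈ A, walkWeight I c u p
        ≤ ∑ q ∈ T, walkWeight I c u (u :: q) := sum_walkWeight_le_sum_cons hc A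
      _ ≤ ∑ q ∈ insert [] (T.erase []), walkWeight I c u (u :: q) :=
          Finset.sum_le_sum_of_subset_of_nonneg (Finset.insert_erase_subset _ _)
            fun _ _ _ => walkWeight_nonneg hc _ _
      _ = (1 - Real.sqrt c) + ∑ q ∈ T.erase [], walkWeight I c u (u :: q) := by
          rw [Finset.sum_insert (Finset.notMem_erase _ _), walkWeight_singleton]
      _ ≤ (1 - Real.sqrt c) + Real.sqrt c := by
          gcongr
          exact sum_walkWeight_cons_le_sqrt (Finset.notMem_erase _ _) fun w _ => hT w
      _ = 1 := sub_add_cancel 1 _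

theorem sum_walkWeight_filter_le_sqrt (hc : c ≤ 1) (u : V) (A : Finset (List V)) :
    ∑ p ∈ A with 2 ≤ p.length, walkWeight I c u p ≤ Real.sqrt c := by
  have hnil : [] ∉ (A.filter (2 ≤ ·.length)).image List.tail := by
    simp only [Finset.mem_image, Finset.mem_filter, not_exists, not_and]
    rintro p ⟨-, hp⟩ htail
    have := congrArg List.length htail
    simp only [List.length_tail, List.length_nil] at this
    omega
  exact (sum_walkWeight_le_sum_cons hc _).trans
    (sum_walkWeight_cons_le_sqrt hnil fun w _ => sum_walkWeight_le_one hc w _)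

theorem Meets.two_le_length {p q : List V} (hpq : Meets p q) (hp : p.head? = some u)
    (hq : q.head? = some v) (huv : u ≠ v) : 2 ≤ p.length ∧ 2 ≤ q.length := by
  obtain ⟨k, hkp, hkq, hk⟩ := hpq
  have hk0 : k ≠ 0 := by
    rintro rfl
    rw [← List.head?_eq_getElem?, ← List.head?_eq_getElem?, hp, hq] at hk
    exact huv (Option.some_injective _ hk)
  omega

theorem walkWeight_mul_walkWeight_meets_le (hc : c ≤ 1) (huv : u ≠ v) (p q : List V) :
    walkWeight I c u p * walkWeight I c v q * (if Meets p q then 1 else 0) ≤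
      (if 2 ≤ p.length then walkWeight I c u p else 0) *
        (if 2 ≤ q.length then walkWeight I c v q else 0) := by
  by_cases h : Meets p q ∧ IsWalkFrom I u p ∧ IsWalkFrom I v q
  · obtain ⟨hpq, hp, hq⟩ := h
    obtain ⟨hp2, hq2⟩ := hpq.two_le_length hp.1 hq.1 huv
    simp [hpq, hp2, hq2]
  · have hzero : walkWeight I c u p * walkWeight I c v q * (if Meets p q then 1 else 0) = 0 := by
      by_cases hpq : Meets p q
      · by_cases hp : IsWalkFrom I u p
        · simp [walkWeight_of_not_isWalkFrom fun hq => h ⟨hpq, hp, hq⟩]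
        · simp [walkWeight_of_not_isWalkFrom hp]
      · simp [hpq]
    rw [hzero]
    exact mul_nonneg (ite_nonneg (walkWeight_nonneg hc u p) le_rfl)
      (ite_nonneg (walkWeight_nonneg hc v q) le_rfl)

theorem tsum_le_mul_of_le_mul {α β : Type*} {F : α × β → ℝ} {f : α → ℝ} {g : β → ℝ}
    {a b : ℝ} (hF : 0 ≤ F) (hf : 0 ≤ f) (hg : 0 ≤ g) (hFfg : ∀ x, F x ≤ f x.1 * g x.2)
    (hfa : ∀ s, ∑ x ∈ s, f x ≤ a) (hgb : ∀ t, ∑ y ∈ t, g y ≤ b) :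
    ∑' x, F x ≤ a * b := by
  have hfs : Summable f := summable_of_sum_le hf hfa
  have hgs : Summable g := summable_of_sum_le hg hgb
  have hfgs : Summable fun x : α × β => f x.1 * g x.2 := hfs.mul_of_nonneg hgs hf hg
  have ha : 0 ≤ a := by simpa using hfa ∅
  calc ∑' x, F x ≤ ∑' x, f x.1 * g x.2 :=
        Summable.tsum_le_tsum hFfg (hfgs.of_nonneg_of_le hF hFfg) hfgs
    _ = (∑' x, f x) * ∑' y, g y := (hfs.tsum_mul_tsum hgs hfgs).symm
    _ ≤ a * b := mul_le_mul (hfs.tsum_le_of_sum_le hfa) (hgs.tsum_le_of_sum_le hgb)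
        (tsum_nonneg hg) ha

theorem simRank_le_c_general
    (I : V → Finset V)
    (c : ℝ) (hc0 : 0 < c) (hc1 : c < 1)
    (u v : V) (huv : u ≠ v) :
    simRank I c u v ≤ c := by
  have hweight (w : V) (p : List V) : 0 ≤ walkWeight I c w p := walkWeight_nonneg hc1.le w p
  have hlong (w : V) (A : Finset (List V)) :
      ∑ p ∈ A, (if 2 ≤ p.length then walkWeight I c w p else 0) ≤ Real.sqrt c := by
    rw [← Finset.sum_filter]
    exact sum_walkWeight_filter_le_sqrt hc1.le w A
  calc simRank I c u v ≤ Real.sqrt c * Real.sqrt c :=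
        tsum_le_mul_of_le_mul
          (fun x => mul_nonneg (mul_nonneg (hweight u x.1) (hweight v x.2))
            (ite_nonneg zero_le_one le_rfl))
          (fun p => ite_nonneg (hweight u p) le_rfl) (fun q => ite_nonneg (hweight v q) le_rfl)
          (fun x => walkWeight_mul_walkWeight_meets_le hc1.le huv x.1 x.2)
          (hlong u) (hlong v)
    _ = c := Real.mul_self_sqrt hc0.le

/-- For distinct nodes `u ≠ v`, the probability that two independent
`√c`-walks from `u` and from `v` meet is at most `c`: `s(u,v) ≤ c`. -/
theorem simRank_le_c [Fintype V]
    (I : V → Finset V) (hI : ∀ v, (I v).Nonempty)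
    (c : ℝ) (hc0 : 0 < c) (hc1 : c < 1)
    (u v : V) (huv : u ≠ v) :
    simRank I c u v ≤ c :=
  simRank_le_c_general I c hc0 hc1 u v huv
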